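/- arXiv:2507.08777 — 2 statements merged into one kernel-verified Lean document; each statement's English description precedes it below -/
import Mathlib

section
/- Let G be a finite simple connected graph of diameter 2 on vertex set [n]. If G is vertex diameter-2-critical (i.e., diam(G - x) >= 3 for every vertex x), then the maximal ideal m = (x_1,...,x_n) is an associated prime of S/NI(G)^2; specifically, NI(G)^2 : (x_1...x_n) = m. -/
/-! If any two vertices are at distance at most 2, any two closed neighbourhoods meet, so
every generator `x_{N[u]} x_{N[v]}` of `NI(G)^2` is divisible by a square `x_z^2`; hence the
squarefree monomial `x_1 ⋯ x_n` is not in `NI(G)^2`. If deleting `t` pushes some `v, w` to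
distance at least 3, then `N[v] ∩ N[w] ⊆ {t}`, so `x_{N[v]} x_{N[w]}` divides `x_t x_1 ⋯ x_n`.
Thus the colon ideal is proper and contains the maximal ideal `m`, so it equals `m`. -/

open MvPolynomial
open scoped Classical

/-- The closed neighborhood of a vertex `i` of `G`, as a `Finset`. -/
noncomputable def closedNbhd {n : ℕ} (G : SimpleGraph (Fin n)) (i : Fin n) : Finset (Fin n) :=
  Finset.univ.filter (fun j => j = i ∨ G.Adj i j)

/-- The closed neighborhood ideal of `G` in `k[x_1, …, x_n]`. -/
noncomputable def NI (k : Type*) [Field k] {n : ℕ} (G : SimpleGraph (Fin n)) :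
    Ideal (MvPolynomial (Fin n) k) :=
  Ideal.span (Set.range fun i => ∏ j ∈ closedNbhd G i, X j)

/-- The maximal homogeneous ideal `(x_1, …, x_n)`. -/
noncomputable def maxIdeal (k : Type*) [Field k] (n : ℕ) : Ideal (MvPolynomial (Fin n) k) :=
  Ideal.span (Set.range (X : Fin n → MvPolynomial (Fin n) k))

namespace SimpleGraph

variable {V : Type*} {H : SimpleGraph V}

lemma edist_le_two_of_adj_or_eq {a b z : V} (ha : H.Adj a z ∨ a = z) (hb : H.Adj z b ∨ z = b) :
    H.edist a b ≤ 2 :=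
  calc H.edist a b ≤ H.edist a z + H.edist z b := H.edist_triangle
    _ ≤ 1 + 1 :=
      add_le_add (edist_le_one_iff_adj_or_eq.mpr ha) (edist_le_one_iff_adj_or_eq.mpr hb)
    _ = 2 := by norm_num

end SimpleGraph

lemma mem_closedNbhd {n : ℕ} {G : SimpleGraph (Fin n)} {i j : Fin n} :
    j ∈ closedNbhd G i ↔ j = i ∨ G.Adj i j := by
  simp [closedNbhd]

lemma exists_mem_closedNbhd_of_edist_le_two {n : ℕ} {G : SimpleGraph (Fin n)} {u v : Fin n}
    (h : G.edist u v ≤ 2) : ∃ z, z ∈ closedNbhd G u ∧ z ∈ closedNbhd G v := by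
  have hreach : G.Reachable u v :=
    SimpleGraph.edist_ne_top_iff_reachable.mp (ne_top_of_le_ne_top (by decide) h)
  obtain ⟨p, hp⟩ := hreach.exists_walk_length_eq_edist
  have hlen : p.length ≤ 2 := by exact_mod_cast hp ▸ h
  simp only [mem_closedNbhd]
  match p, hlen with
  | .nil, _ => exact ⟨u, .inl rfl, .inl rfl⟩
  | .cons h₁ .nil, _ => exact ⟨v, .inr h₁, .inl rfl⟩
  | .cons h₁ (.cons h₂ .nil), _ => exact ⟨_, .inr h₁, .inr h₂.symm⟩

lemma closedNbhd_inter_subset_of_three_le_edist_induce {n : ℕ} {G : SimpleGraph (Fin n)}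
    {t : Fin n} {v w : ({y : Fin n | y ≠ t} : Set (Fin n))}
    (h : 3 ≤ (G.induce {y : Fin n | y ≠ t}).edist v w) :
    closedNbhd G v ∩ closedNbhd G w ⊆ {t} := by
  intro z hz
  simp only [Finset.mem_inter, mem_closedNbhd] at hz
  by_contra hzt
  have hle : (G.induce {y : Fin n | y ≠ t}).edist v w ≤ 2 := by
    refine SimpleGraph.edist_le_two_of_adj_or_eq (z := ⟨z, by simpa using hzt⟩) ?_ ?_
    · simpa [SimpleGraph.induce_adj, Subtype.ext_iff, eq_comm] using hz.1.symm
    · simpa [SimpleGraph.induce_adj, Subtype.ext_iff, G.adj_comm, or_comm] using hz.2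
  exact absurd (h.trans hle) (by decide)

namespace MvPolynomial

variable {σ R : Type*} [CommSemiring R]

lemma span_range_X_eq_ker_constantCoeff :
    Ideal.span (Set.range (X : σ → MvPolynomial σ R)) = RingHom.ker constantCoeff := by
  ext p
  rw [← Set.image_univ, mem_ideal_span_X_image, RingHom.mem_ker, constantCoeff_eq,
    ← notMem_support_iff]
  constructor
  · intro h h0
    obtain ⟨i, -, hi⟩ := h 0 h0
    exact hi rfl
  · intro h m hm
    obtain ⟨i, hi⟩ := Finsupp.ne_iff.mp (ne_of_mem_of_not_mem hm h)
    exact ⟨i, trivial, hi⟩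

lemma prod_X_notMem_span_X_sq [Nontrivial R] (s : Finset σ) :
    (∏ i ∈ s, X i : MvPolynomial σ R) ∉
      Ideal.span (Set.range fun i => (X i : MvPolynomial σ R) ^ 2) := by
  classical
  simp_rw [X_pow_eq_monomial, X, ← monomial_sum_one, Set.range_comp' (monomial · (1 : R)),
    mem_ideal_span_monomial_image, support_monomial, if_neg one_ne_zero, Finset.mem_singleton,
    forall_eq, Set.mem_range, exists_exists_eq_and, Finsupp.single_le_iff, Finset.sum_apply',
    Finsupp.single_apply, Finset.sum_ite_eq', not_exists]
  intro i
  split_ifs <;> omega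

end MvPolynomial

lemma Finset.prod_mul_prod_dvd_of_inter_subset_singleton {ι M : Type*} [Fintype ι]
    [DecidableEq ι] [CommMonoid M] (f : ι → M) {s t : Finset ι} {i : ι}
    (h : s ∩ t ⊆ {i}) :
    (∏ j ∈ s, f j) * ∏ j ∈ t, f j ∣ f i * ∏ j, f j := by
  rw [← Finset.prod_union_inter, mul_comm (f i)]
  exact mul_dvd_mul (Finset.prod_dvd_prod_of_subset _ _ _ (Finset.subset_univ _))
    (by simpa using Finset.prod_dvd_prod_of_subset _ _ f h)

lemma Ideal.isAssociatedPrime_quotient_of_colon_eq {R : Type*} [CommRing R] {I P : Ideal R}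
    [hP : P.IsPrime] {a : R} (h : I.colon (Ideal.span {a}) = P) :
    IsAssociatedPrime P (R ⧸ I) := by
  refine ⟨hP, Submodule.Quotient.mk a, ?_⟩
  rw [← hP.radical, ← h]
  congr 1
  ext r
  rw [Submodule.mem_colon_singleton, Ideal.mem_colon_span_singleton,
    ← Submodule.Quotient.mk_smul, Submodule.mem_bot, Submodule.Quotient.mk_eq_zero,
    smul_eq_mul]

section

variable {n : ℕ} {k : Type*} [Field k]

lemma maxIdeal_isMaximal : (maxIdeal k n).IsMaximal := by
  rw [maxIdeal, span_range_X_eq_ker_constantCoeff]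
  exact RingHom.ker_isMaximal_of_surjective _ fun a => ⟨C a, constantCoeff_C _ a⟩

lemma NI_sq_le_span_X_sq {G : SimpleGraph (Fin n)} (h : ∀ u v : Fin n, G.edist u v ≤ 2) :
    NI k G ^ 2 ≤ Ideal.span (Set.range fun i => (X i : MvPolynomial (Fin n) k) ^ 2) := by
  rw [pow_two, NI, Ideal.span_mul_span', Ideal.span_le]
  rintro _ ⟨_, ⟨u, rfl⟩, _, ⟨v, rfl⟩, rfl⟩
  obtain ⟨z, hu, hv⟩ := exists_mem_closedNbhd_of_edist_le_two (h u v)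
  refine Ideal.mem_of_dvd _ ?_ (Ideal.subset_span ⟨z, rfl⟩)
  simp only [pow_two]
  exact mul_dvd_mul (Finset.dvd_prod_of_mem _ hu) (Finset.dvd_prod_of_mem _ hv)

lemma X_mul_prod_X_mem_NI_sq {G : SimpleGraph (Fin n)} {t : Fin n}
    (h : ∃ v w : ({y : Fin n | y ≠ t} : Set (Fin n)),
      3 ≤ (G.induce {y : Fin n | y ≠ t}).edist v w) :
    X t * ∏ i, (X i : MvPolynomial (Fin n) k) ∈ NI k G ^ 2 := by
  obtain ⟨v, w, h⟩ := h
  refine Ideal.mem_of_dvd _ (Finset.prod_mul_prod_dvd_of_inter_subset_singleton X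
    (closedNbhd_inter_subset_of_three_le_edist_induce h)) ?_
  exact pow_two (NI k G) ▸ Ideal.mul_mem_mul (Ideal.subset_span ⟨v, rfl⟩)
    (Ideal.subset_span ⟨w, rfl⟩)

end

theorem maxIdeal_isAssociatedPrime_of_critical_general {n : ℕ} {k : Type*} [Field k]
    (G : SimpleGraph (Fin n))
    (hdiam_le : ∀ u v : Fin n, G.edist u v ≤ 2)
    (hcrit : ∀ x : Fin n, ∃ v w : ({y : Fin n | y ≠ x} : Set (Fin n)),
      3 ≤ (G.induce {y : Fin n | y ≠ x}).edist v w) :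
    Submodule.colon (NI k G ^ 2)
        (Ideal.span {∏ i : Fin n, (X i : MvPolynomial (Fin n) k)}) = maxIdeal k n ∧
    IsAssociatedPrime (maxIdeal k n) (MvPolynomial (Fin n) k ⧸ (NI k G ^ 2)) := by
  have hmax : (maxIdeal k n).IsMaximal := maxIdeal_isMaximal
  have hcolon : Submodule.colon (NI k G ^ 2)
      (Ideal.span {∏ i : Fin n, (X i : MvPolynomial (Fin n) k)}) = maxIdeal k n := by
    refine (hmax.eq_of_le ?_ ?_).symm
    · rw [Ne, Ideal.eq_top_iff_one, Ideal.mem_colon_span_singleton, one_mul]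
      exact fun h => prod_X_notMem_span_X_sq Finset.univ (NI_sq_le_span_X_sq hdiam_le h)
    · rw [maxIdeal, Ideal.span_le]
      rintro _ ⟨t, rfl⟩
      exact Ideal.mem_colon_span_singleton.mpr (X_mul_prod_X_mem_NI_sq (hcrit t))
  exact ⟨hcolon, Ideal.isAssociatedPrime_quotient_of_colon_eq hcolon⟩

/-- If `G` is a connected graph of diameter `2` which is vertex diameter-2-critical
(deleting any vertex raises the diameter to at least `3`), then
`NI(G)^2 : (x_1 ⋯ x_n) = (x_1, …, x_n)`; in particular the maximal homogeneous ideal is an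
associated prime of `S/NI(G)^2`. -/
theorem maxIdeal_isAssociatedPrime_of_critical {n : ℕ} {k : Type*} [Field k]
    (G : SimpleGraph (Fin n)) (hconn : G.Connected)
    (hdiam_le : ∀ u v : Fin n, G.edist u v ≤ 2)
    (hdiam_eq : ∃ u v : Fin n, G.edist u v = 2)
    (hcrit : ∀ x : Fin n, ∃ v w : ({y : Fin n | y ≠ x} : Set (Fin n)),
      3 ≤ (G.induce {y : Fin n | y ≠ x}).edist v w) :
    Submodule.colon (NI k G ^ 2)
        (Ideal.span {∏ i : Fin n, (X i : MvPolynomial (Fin n) k)}) = maxIdeal k n ∧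
    IsAssociatedPrime (maxIdeal k n) (MvPolynomial (Fin n) k ⧸ (NI k G ^ 2)) :=
  maxIdeal_isAssociatedPrime_of_critical_general G hdiam_le hcrit
end

section
/- Let G = C_n be the cycle on n vertices, n >= 3. Then the maximal ideal (x_1,...,x_n) is an associated prime of S/NI(G)^2 if and only if n = 5. -/
/-!
Since `NI(G)^2` is a monomial ideal, `(x_1, …, x_n)` is associated to `S/NI(G)^2` exactly when
some monomial `x^d` lies outside `NI(G)^2` while every `x_i x^d` lies inside, i.e. is divisible by
some `x_{N[a]} x_{N[b]}`. For the cycle this forces `d` to be squarefree, with `N[a]` and `N[b]`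
meeting only at `i`. If `d_i = 1`, both contain `i`, and unless one of them is `N[i+1]` both also
contain `i - 1`; so `d_{i+1} = 1`, and going around the cycle, `x^d = x_1 ⋯ x_n`. Its degree `n`
is at least `2 · 3 - 1 = 5`, and for `n ≥ 6` it is divisible by `x_{N[1]} x_{N[4]}`. For `n = 5`,
`x_1 ⋯ x_5` has degree `5 < 6`, while `x_i x_1 ⋯ x_5 = x_{N[i-1]} x_{N[i+1]}`.
-/

open MvPolynomial
open scoped Classical

theorem isAssociatedPrime_iff_exists_le_colon {R M : Type*} [CommSemiring R]
    [IsNoetherianRing R] [AddCommMonoid M] [Module R M] {m : Ideal R} (hm : m.IsMaximal) :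
    IsAssociatedPrime m M ↔ ∃ x : M, x ≠ 0 ∧ m ≤ (⊥ : Submodule R M).colon {x} := by
  have colon_ne_top {x : M} (hx : x ≠ 0) : (⊥ : Submodule R M).colon {x} ≠ ⊤ := fun h => by
    have : (1 : R) ∈ (⊥ : Submodule R M).colon {x} := h ▸ Submodule.mem_top
    simp_all
  rw [isAssociatedPrime_iff]
  constructor
  · rintro ⟨-, x, rfl⟩
    refine ⟨x, ?_, le_rfl⟩
    rintro rfl
    exact hm.ne_top (by ext; simp [Submodule.mem_colon_singleton])
  · rintro ⟨x, hx, hle⟩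
    exact ⟨hm.isPrime, x, hm.eq_of_le (colon_ne_top hx) hle⟩

theorem isAssociatedPrime_span_quotient_iff {R : Type*} [CommRing R] [IsNoetherianRing R]
    {S : Set R} {J : Ideal R} (hS : (Ideal.span S).IsMaximal) :
    IsAssociatedPrime (Ideal.span S) (R ⧸ J) ↔ ∃ f ∉ J, ∀ r ∈ S, r * f ∈ J := by
  rw [isAssociatedPrime_iff_exists_le_colon hS, Ideal.Quotient.mk_surjective.exists]
  simp only [ne_eq, Ideal.Quotient.eq_zero_iff_mem, Ideal.span_le, Set.subset_def,
    SetLike.mem_coe, Submodule.mem_colon_singleton, Submodule.mem_bot, Algebra.smul_def,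
    Ideal.Quotient.algebraMap_eq, ← map_mul]

namespace MvPolynomial

variable {σ R : Type*} [CommSemiring R]

theorem idealOfVars_eq_ker_constantCoeff :
    idealOfVars σ R = RingHom.ker (constantCoeff : MvPolynomial σ R →+* R) := by
  ext p
  rw [← pow_one (idealOfVars σ R), mem_pow_idealOfVars_iff, RingHom.mem_ker, constantCoeff_eq]
  simp only [mem_support_iff, Nat.one_le_iff_ne_zero, ne_eq, Finsupp.degree_eq_zero_iff]
  exact ⟨fun h => by_contra fun h0 => h 0 h0 rfl, fun h x hx hx0 => hx (hx0 ▸ h)⟩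

theorem isMaximal_idealOfVars {K : Type*} [Field K] : (idealOfVars σ K).IsMaximal := by
  rw [idealOfVars_eq_ker_constantCoeff]
  exact RingHom.ker_isMaximal_of_surjective _ fun a => ⟨C a, constantCoeff_C _ _⟩

variable [Nontrivial R]

theorem exists_forall_X_mul_mem_span_monomial_iff {s : Set (σ →₀ ℕ)} :
    (∃ f ∉ Ideal.span ((monomial · (1 : R)) '' s),
        ∀ i, X i * f ∈ Ideal.span ((monomial · (1 : R)) '' s)) ↔
      ∃ c, (∀ t ∈ s, ¬t ≤ c) ∧ ∀ i, ∃ t ∈ s, t ≤ c + Finsupp.single i 1 := by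
  simp only [mem_ideal_span_monomial_image]
  constructor
  · rintro ⟨f, hf, hX⟩
    push Not at hf
    obtain ⟨c, hc, hcs⟩ := hf
    refine ⟨c, hcs, fun i => hX i _ ?_⟩
    rwa [mem_support_iff, add_comm, coeff_X_mul, ← mem_support_iff]
  · rintro ⟨c, hcs, hX⟩
    refine ⟨monomial c 1, ?_, fun i => ?_⟩
    · simpa [support_monomial] using hcs
    · simpa [X, monomial_mul, add_comm] using hX i

end MvPolynomial

section ClosedNbhdExp

variable {n : ℕ} (G : SimpleGraph (Fin n))

noncomputable def closedNbhdExp (i : Fin n) : Fin n →₀ ℕ :=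
  ∑ j ∈ closedNbhd G i, Finsupp.single j 1

lemma self_mem_closedNbhd (i : Fin n) : i ∈ closedNbhd G i := by
  simp [closedNbhd]

lemma closedNbhdExp_apply (i j : Fin n) :
    closedNbhdExp G i j = if j ∈ closedNbhd G i then 1 else 0 := by
  simp [closedNbhdExp, Finsupp.single_apply]

lemma closedNbhdExp_apply_le_one (i j : Fin n) : closedNbhdExp G i j ≤ 1 := by
  rw [closedNbhdExp_apply]; split <;> omega

lemma closedNbhdExp_apply_eq_one_iff {i j : Fin n} :
    closedNbhdExp G i j = 1 ↔ j ∈ closedNbhd G i := by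
  rw [closedNbhdExp_apply]; split <;> simp_all

lemma degree_closedNbhdExp (i : Fin n) : (closedNbhdExp G i).degree = (closedNbhd G i).card := by
  simp [closedNbhdExp, map_sum, Finsupp.degree_single]

lemma NI_eq_span_monomial (k : Type*) [Field k] :
    NI k G = Ideal.span ((monomial · (1 : k)) '' Set.range (closedNbhdExp G)) := by
  rw [NI, ← Set.range_comp]
  congr! with i
  exact (monomial_sum_one _ _).symm

lemma NI_sq_eq_span_monomial (k : Type*) [Field k] :
    NI k G ^ 2 = Ideal.span ((monomial · (1 : k)) '' Set.range
      fun p : Fin n × Fin n => closedNbhdExp G p.1 + closedNbhdExp G p.2) := by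
  rw [NI_eq_span_monomial, pow_two, Ideal.span_mul_span']
  congr 1
  ext x
  simp [Set.mem_mul, monomial_mul]

end ClosedNbhdExp

/-- `x^d` lies outside `NI(G)^2` while `x_i x^d` lies inside for every `i`. -/
def IsSocleExp {n : ℕ} (G : SimpleGraph (Fin n)) (d : Fin n →₀ ℕ) : Prop :=
  (∀ a b, ¬closedNbhdExp G a + closedNbhdExp G b ≤ d) ∧
    ∀ i, ∃ a b, closedNbhdExp G a + closedNbhdExp G b ≤ d + Finsupp.single i 1

theorem isAssociatedPrime_maxIdeal_quotient_NI_sq_iff {n : ℕ} (G : SimpleGraph (Fin n))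
    (k : Type*) [Field k] :
    IsAssociatedPrime (maxIdeal k n) (MvPolynomial (Fin n) k ⧸ NI k G ^ 2) ↔
      ∃ d, IsSocleExp G d := by
  rw [maxIdeal, isAssociatedPrime_span_quotient_iff isMaximal_idealOfVars, NI_sq_eq_span_monomial]
  simp only [Set.forall_mem_range]
  rw [exists_forall_X_mul_mem_span_monomial_iff]
  simp only [Set.forall_mem_range, Set.exists_range_iff, Prod.forall, Prod.exists, IsSocleExp]

namespace IsSocleExp

variable {n : ℕ} {G : SimpleGraph (Fin n)} {d : Fin n →₀ ℕ}

lemma apply_add_apply_eq (h : IsSocleExp G d) {a b i : Fin n}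
    (hab : closedNbhdExp G a + closedNbhdExp G b ≤ d + Finsupp.single i 1) :
    closedNbhdExp G a i + closedNbhdExp G b i = d i + 1 := by
  obtain ⟨j, hj⟩ : ∃ j, d j < closedNbhdExp G a j + closedNbhdExp G b j := by
    by_contra! hle
    exact h.1 a b fun j => hle j
  have hj' := hab j
  simp only [Finsupp.add_apply, Finsupp.single_apply] at hj'
  split_ifs at hj' with hij
  · subst hij; omega
  · omega

lemma apply_le_one (h : IsSocleExp G d) (i : Fin n) : d i ≤ 1 := by
  obtain ⟨a, b, hab⟩ := h.2 i
  have := h.apply_add_apply_eq hab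
  have := closedNbhdExp_apply_le_one G a i
  have := closedNbhdExp_apply_le_one G b i
  omega

lemma mem_closedNbhd_of_apply_eq_one (h : IsSocleExp G d) {a b i : Fin n}
    (hab : closedNbhdExp G a + closedNbhdExp G b ≤ d + Finsupp.single i 1) (hi : d i = 1) :
    i ∈ closedNbhd G a ∧ i ∈ closedNbhd G b := by
  have := h.apply_add_apply_eq hab
  have := closedNbhdExp_apply_le_one G a i
  have := closedNbhdExp_apply_le_one G b i
  simp only [← closedNbhdExp_apply_eq_one_iff]
  omega

end IsSocleExp

section Cycle

open SimpleGraph Fin.CommRing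

variable {n : ℕ}

lemma card_closedNbhd_cycleGraph (hn : 3 ≤ n) (a : Fin n) :
    (closedNbhd (cycleGraph n) a).card = 3 := by
  obtain ⟨m, rfl⟩ : ∃ m, n = m + 3 := ⟨n - 3, by omega⟩
  have : closedNbhd (cycleGraph (m + 3)) a = insert a ((cycleGraph (m + 3)).neighborFinset a) := by
    ext; simp [closedNbhd]
  rw [this, Finset.card_insert_of_notMem (by simp), card_neighborFinset_eq_degree,
    cycleGraph_degree_three_le]

variable [NeZero n]

lemma mem_closedNbhd_cycleGraph (hn : 2 ≤ n) {a j : Fin n} :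
    j ∈ closedNbhd (cycleGraph n) a ↔ j = a - 1 ∨ j = a ∨ j = a + 1 := by
  obtain ⟨m, rfl⟩ : ∃ m, n = m + 2 := ⟨n - 2, by omega⟩
  simp only [closedNbhd, Finset.mem_filter, Finset.mem_univ, true_and]
  rw [← mem_neighborSet, cycleGraph_neighborSet]
  exact or_left_comm

lemma eq_add_one_or_sub_one_mem_closedNbhd_cycleGraph (hn : 2 ≤ n) {a i : Fin n}
    (hi : i ∈ closedNbhd (cycleGraph n) a) :
    a = i + 1 ∨ i - 1 ∈ closedNbhd (cycleGraph n) a := by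
  rw [mem_closedNbhd_cycleGraph hn] at hi ⊢
  rcases hi with rfl | rfl | rfl
  · left; ring
  · exact Or.inr (Or.inl rfl)
  · right; right; left; ring

lemma disjoint_closedNbhd_one_four_cycleGraph (m : ℕ) :
    Disjoint (closedNbhd (cycleGraph (m + 6)) 1) (closedNbhd (cycleGraph (m + 6)) 4) := by
  refine Finset.disjoint_left.2 fun j h1 h4 => ?_
  rw [mem_closedNbhd_cycleGraph (by omega)] at h1 h4
  norm_num at h1 h4
  rcases h1 with rfl | rfl | rfl <;> simp (disch := omega) [Fin.ext_iff, Nat.mod_eq_of_lt] at h4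

lemma isSocleExp_cycleGraph_five :
    IsSocleExp (cycleGraph 5) (Finsupp.equivFunOnFinite.symm 1) := by
  refine ⟨fun a b hab => ?_, fun i => ⟨i - 1, i + 1, fun j => ?_⟩⟩
  · have := Finsupp.degree_mono hab
    simp only [map_add, degree_closedNbhdExp, card_closedNbhd_cycleGraph (by norm_num : 3 ≤ 5)]
      at this
    simp [Finsupp.degree_eq_sum] at this
  · simp only [Finsupp.add_apply, closedNbhdExp_apply,
      mem_closedNbhd_cycleGraph (by norm_num : 2 ≤ 5), Finsupp.single_apply,
      Finsupp.equivFunOnFinite_symm_apply_apply]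
    revert i j
    decide

namespace IsSocleExp

variable {d : Fin n →₀ ℕ}

lemma five_le_degree (hn : 3 ≤ n) (h : IsSocleExp (cycleGraph n) d) : 5 ≤ d.degree := by
  obtain ⟨a, b, hab⟩ := h.2 0
  have := Finsupp.degree_mono hab
  simp only [map_add, degree_closedNbhdExp, card_closedNbhd_cycleGraph hn,
    Finsupp.degree_single] at this
  omega

lemma apply_add_one (hn : 2 ≤ n) (h : IsSocleExp (cycleGraph n) d) {i : Fin n} (hi : d i = 1) :
    d (i + 1) = 1 := by
  have : Nontrivial (Fin n) := Fin.nontrivial_iff_two_le.2 hn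
  obtain ⟨a, b, hab⟩ := h.2 i
  obtain ⟨hai, hbi⟩ := h.mem_closedNbhd_of_apply_eq_one hab hi
  have hoff {j : Fin n} (hj : j ≠ i) :
      (if j ∈ closedNbhd (cycleGraph n) a then 1 else 0) +
        (if j ∈ closedNbhd (cycleGraph n) b then 1 else 0) ≤ d j := by
    simpa [closedNbhdExp_apply, Finsupp.single_apply, hj.symm] using hab j
  have hsucc := hoff (j := i + 1) (by simp)
  have hpred := hoff (j := i - 1) (by simp)
  have := h.apply_le_one (i - 1)
  refine le_antisymm (h.apply_le_one _) ?_
  rcases eq_add_one_or_sub_one_mem_closedNbhd_cycleGraph hn hai with rfl | ha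
  · simp only [self_mem_closedNbhd, if_true] at hsucc; omega
  rcases eq_add_one_or_sub_one_mem_closedNbhd_cycleGraph hn hbi with rfl | hb
  · simp only [self_mem_closedNbhd, if_true] at hsucc; omega
  · simp only [ha, hb, if_true] at hpred; omega

lemma apply_eq_one (hn : 3 ≤ n) (h : IsSocleExp (cycleGraph n) d) (j : Fin n) : d j = 1 := by
  obtain ⟨i, hi⟩ : ∃ i, d i = 1 := by
    by_contra! h0
    have : d.degree = 0 := by
      rw [Finsupp.degree_eq_sum]
      exact Finset.sum_eq_zero fun j _ => by have := h.apply_le_one j; have := h0 j; omega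
    have := h.five_le_degree hn
    omega
  have (m : ℕ) : d (i + m) = 1 := by
    induction m with
    | zero => simpa using hi
    | succ m ih => simpa [add_assoc] using h.apply_add_one (by omega) ih
  simpa using this (j - i).val

lemma eq_five (hn : 3 ≤ n) (h : IsSocleExp (cycleGraph n) d) : n = 5 := by
  have hdeg := h.five_le_degree hn
  simp only [Finsupp.degree_eq_sum, h.apply_eq_one hn, Finset.sum_const, Finset.card_univ,
    Fintype.card_fin, smul_eq_mul, mul_one] at hdeg
  by_contra hne
  obtain ⟨m, rfl⟩ : ∃ m, n = m + 6 := ⟨n - 6, by omega⟩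
  refine h.1 1 4 fun j => ?_
  have hdisj := Finset.disjoint_left.1 (disjoint_closedNbhd_one_four_cycleGraph m)
  simp only [Finsupp.add_apply, closedNbhdExp_apply, h.apply_eq_one hn]
  split_ifs with h1 h4 <;> first | omega | exact absurd h4 (hdisj h1)

end IsSocleExp

end Cycle

/-- For the cycle `Cₙ` (`n ≥ 3`), the maximal homogeneous ideal `(x_1, …, x_n)` is an
associated prime of `S/NI(Cₙ)^2` if and only if `n = 5`. -/
theorem cycle_maxIdeal_isAssociatedPrime_iff {n : ℕ} (hn : 3 ≤ n) {k : Type*} [Field k] :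
    IsAssociatedPrime (maxIdeal k n)
        (MvPolynomial (Fin n) k ⧸ (NI k (SimpleGraph.cycleGraph n) ^ 2)) ↔ n = 5 := by
  have : NeZero n := ⟨by omega⟩
  rw [isAssociatedPrime_maxIdeal_quotient_NI_sq_iff]
  constructor
  · rintro ⟨d, hd⟩
    exact hd.eq_five hn
  · rintro rfl
    exact ⟨_, isSocleExp_cycleGraph_five⟩
end
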